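/- arXiv:1309.5925 — 6 statements merged into one kernel-verified Lean document; each statement's English description precedes it below -/
import Mathlib

section
/- Player Max can guarantee a nonnegative mean payoff from the initial state j̄ — that is, there exists a strategy for Max such that against every strategy of Min the resulting play has mean payoff ≥ 0 — if and only if there exists x : Fin n → WithBot ℝ with x j̄ ≥ 0 and A ⊙ x ≤ B ⊙ x componentwise. -/
noncomputable section
open Finset

variable {m n : ℕ}

/-- The state reached at the end of a finite history: the initial state `j0` if the history
is empty, and otherwise the last Max-state recorded in it. -/
def lastState (j0 : Fin n) (h : List (Fin m × Fin n)) : Fin n :=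
  (h.getLast?).elim j0 Prod.snd

/-- A finite history `[(i₁, j₁), …, (i_p, j_p)]` of the game started at `j0` is valid when
each Min move `i_k` satisfies `A i_k j_{k-1} ≠ ⊥` and each Max move `j_k` satisfies
`B i_k j_k ≠ ⊥`. -/
def ValidHist (A B : Matrix (Fin m) (Fin n) (WithBot ℝ)) (j0 : Fin n)
    (h : List (Fin m × Fin n)) : Prop :=
  ∀ (k : ℕ) (hk : k < h.length),
    A (h.get ⟨k, hk⟩).1 (lastState j0 (h.take k)) ≠ ⊥ ∧
    B (h.get ⟨k, hk⟩).1 (h.get ⟨k, hk⟩).2 ≠ ⊥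

/-- A strategy for player Max: given the initial state, the past history, and the state just
chosen by Min, choose the next Max state. -/
def MaxStrategy (m n : ℕ) : Type :=
  Fin n → List (Fin m × Fin n) → Fin m → Fin n

/-- A strategy for player Min: given the initial state and the past history, choose the next
Min state. -/
def MinStrategy (m n : ℕ) : Type :=
  Fin n → List (Fin m × Fin n) → Fin m

/-- A Max strategy is valid when, after any valid history followed by a valid Min move `i`,
its answer `j` satisfies `B i j ≠ ⊥`. -/
def ValidMaxStrategy (A B : Matrix (Fin m) (Fin n) (WithBot ℝ)) (σ : MaxStrategy m n) :
    Prop :=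
  ∀ (j0 : Fin n) (h : List (Fin m × Fin n)) (i : Fin m),
    ValidHist A B j0 h → A i (lastState j0 h) ≠ ⊥ → B i (σ j0 h i) ≠ ⊥

/-- A Min strategy is valid when after any valid history its answer `i` satisfies
`A i j ≠ ⊥`, where `j` is the current state. -/
def ValidMinStrategy (A B : Matrix (Fin m) (Fin n) (WithBot ℝ)) (τ : MinStrategy m n) :
    Prop :=
  ∀ (j0 : Fin n) (h : List (Fin m × Fin n)),
    ValidHist A B j0 h → A (τ j0 h) (lastState j0 h) ≠ ⊥

/-- The history after `p` rounds of the play where Min plays `τ` and Max plays `σ`,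
starting from `j0`. -/
def playHist (σ : MaxStrategy m n) (τ : MinStrategy m n) (j0 : Fin n) : ℕ → List (Fin m × Fin n)
  | 0 => []
  | p + 1 =>
    let h := playHist σ τ j0 p
    let i := τ j0 h
    h ++ [(i, σ j0 h i)]

/-- `playI σ τ j0 p` is the Min state `i_{p+1}` chosen at round `p + 1` of the play. -/
def playI (σ : MaxStrategy m n) (τ : MinStrategy m n) (j0 : Fin n) (p : ℕ) : Fin m :=
  τ j0 (playHist σ τ j0 p)

/-- `playJ σ τ j0 p` is the Max state `j_p` of the play (with `j_0 = j0`). -/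
def playJ (σ : MaxStrategy m n) (τ : MinStrategy m n) (j0 : Fin n) : ℕ → Fin n
  | 0 => j0
  | p + 1 => σ j0 (playHist σ τ j0 p) (playI σ τ j0 p)

/-- The mean payoff for player Max of the play determined by the strategies `σ` and `τ`:
`liminf_{p→∞} (1/p) Σ_{k=1}^{p} (−A i_k j_{k−1} + B i_k j_k)`. -/
def meanPayoff (A B : Matrix (Fin m) (Fin n) (WithBot ℝ)) (σ : MaxStrategy m n)
    (τ : MinStrategy m n) (j0 : Fin n) : ℝ :=
  Filter.liminf
    (fun p : ℕ =>
      (1 / (p : ℝ)) *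
        ∑ k ∈ Finset.range p,
          (-(A (playI σ τ j0 k) (playJ σ τ j0 k)).unbotD 0 +
            (B (playI σ τ j0 k) (playJ σ τ j0 (k + 1))).unbotD 0))
    Filter.atTop

/-
If `x j̄ ≥ 0` and `A ⊙ x ≤ B ⊙ x`, Max answers every move `i` of Min by a `j'` maximizing
`B i j' + x j'`. Along the resulting play the accumulated payoff plus `x j_p` never drops below
`x j̄`, so the payoffs are bounded below and the mean payoff is nonnegative.

Conversely, consider the first-cycle game: the play is recorded as its loop-erased path, and it
ends as soon as a state repeats, Max winning iff the closed cycle has nonnegative weight. By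
excluded middle one of the players wins it. If Min does, Min plays that winning strategy on the
loop-erased path of the actual, infinite play: every erased cycle weighs at most `-δ`, where
`δ > 0` comes from the finitely many possible weights of simple paths, and a cycle is erased at
least once every `n` rounds, so the mean payoff is at most `-δ / n`. If Max does, the pairs
(state, accumulated weight) at the top of Max-winning loop-erased paths form an energy invariant
that is bounded below, and the least energy `u j` needed at each state gives the solution
`x j = u j̄ - u j`.
-/

open Filter Topology Pointwise

theorem liminf_average_nonneg {S : ℕ → ℝ} {C K : ℝ} (hC : ∀ p, S p ≤ C * p)
    (hK : ∀ p, -K ≤ S p) : 0 ≤ liminf (fun p : ℕ => 1 / (p : ℝ) * S p) atTop := by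
  have hlim : Tendsto (fun p : ℕ => 1 / (p : ℝ) * -K) atTop (𝓝 0) := by
    simpa using tendsto_one_div_atTop_nhds_zero_nat.mul_const (-K)
  have hbdd : ∀ᶠ p : ℕ in atTop, 1 / (p : ℝ) * S p ≤ C := by
    filter_upwards [eventually_gt_atTop 0] with p hp
    rw [one_div, inv_mul_le_iff₀ (by positivity)]
    linarith [hC p]
  calc (0 : ℝ) = liminf (fun p : ℕ => 1 / (p : ℝ) * -K) atTop := hlim.liminf_eq.symm
    _ ≤ _ := liminf_le_liminf
      (Eventually.of_forall fun p => mul_le_mul_of_nonneg_left (hK p) (by positivity))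
      hlim.isBoundedUnder_ge (isBoundedUnder_of_eventually_le hbdd).isCoboundedUnder_ge

theorem liminf_average_neg {S : ℕ → ℝ} {C a δ : ℝ} (hC : ∀ p, -(C * p) ≤ S p) (hδ : 0 < δ)
    (ha : ∀ p, S p ≤ a - δ * p) : liminf (fun p : ℕ => 1 / (p : ℝ) * S p) atTop < 0 := by
  have hlim : Tendsto (fun p : ℕ => 1 / (p : ℝ) * a - δ) atTop (𝓝 (-δ)) := by
    simpa using (tendsto_one_div_atTop_nhds_zero_nat.mul_const a).sub_const δ
  have hbdd : ∀ᶠ p : ℕ in atTop, -C ≤ 1 / (p : ℝ) * S p := by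
    filter_upwards [eventually_gt_atTop 0] with p hp
    rw [one_div, le_inv_mul_iff₀ (by positivity)]
    linarith [hC p]
  have hle : ∀ᶠ p : ℕ in atTop, 1 / (p : ℝ) * S p ≤ 1 / (p : ℝ) * a - δ := by
    filter_upwards [eventually_gt_atTop 0] with p hp
    calc 1 / (p : ℝ) * S p ≤ 1 / (p : ℝ) * (a - δ * p) :=
          mul_le_mul_of_nonneg_left (ha p) (by positivity)
      _ = 1 / (p : ℝ) * a - δ := by field_simp
  calc liminf (fun p : ℕ => 1 / (p : ℝ) * S p) atTop
      ≤ liminf (fun p : ℕ => 1 / (p : ℝ) * a - δ) atTop :=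
        liminf_le_liminf hle (isBoundedUnder_of_eventually_ge hbdd)
          hlim.isBoundedUnder_le.isCoboundedUnder_ge
    _ = -δ := hlim.liminf_eq
    _ < 0 := neg_lt_zero.2 hδ

theorem Finset.exists_pos_forall_le_neg_of_neg (s : Finset ℝ) :
    ∃ δ > 0, ∀ c ∈ s, c < 0 → c ≤ -δ := by
  set t := insert (-1 : ℝ) (s.filter (· < 0))
  have ht : t.Nonempty := insert_nonempty _ _
  refine ⟨-t.max' ht, neg_pos.2 ((t.max'_lt_iff ht).2 ?_), fun c hc hneg => ?_⟩
  · simp only [t, mem_insert, mem_filter]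
    rintro y (rfl | ⟨-, hy⟩) <;> linarith
  · rw [neg_neg]
    exact t.le_max' c (by simp [t, hc, hneg])

theorem List.dropWhile_fst_ne_eq_cons {α β : Type*} [DecidableEq α] {l : List (α × β)}
    (hl : (l.map Prod.fst).Nodup) {e : α × β} (he : e ∈ l) :
    ∃ q, l.dropWhile (fun x => x.1 ≠ e.1) = e :: q := by
  induction l with
  | nil => simp at he
  | cons b t ih =>
    rw [List.map_cons, List.nodup_cons] at hl
    by_cases hbe : b = e
    · subst hbe
      exact ⟨t, List.dropWhile_cons_of_neg (by simp)⟩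
    · have het : e ∈ t := (List.mem_cons.1 he).resolve_left (Ne.symm hbe)
      have hne : b.1 ≠ e.1 := fun h => hl.1 (h ▸ List.mem_map_of_mem het)
      rw [List.dropWhile_cons_of_pos (by simpa using hne)]
      exact ih hl.2 het

namespace MeanPayoffGame

variable (A B : Matrix (Fin m) (Fin n) (WithBot ℝ))

/-- Max's payoff in the round where Min moves `i` from `j` and Max answers `j'`. -/
def wt (i : Fin m) (j j' : Fin n) : ℝ := (B i j').unbotD 0 - (A i j).unbotD 0

def payoffSum (σ : MaxStrategy m n) (τ : MinStrategy m n) (j0 : Fin n) (p : ℕ) : ℝ :=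
  ∑ k ∈ range p, wt A B (playI σ τ j0 k) (playJ σ τ j0 k) (playJ σ τ j0 (k + 1))

variable {A B}

theorem wt_eq_of_eq_coe {i : Fin m} {j j' : Fin n} {α β : ℝ} (hα : A i j = α) (hβ : B i j' = β) :
    wt A B i j j' = β - α := by
  simp [wt, hα, hβ]

theorem exists_abs_wt_le : ∃ C, ∀ i j j', |wt A B i j j'| ≤ C := by
  obtain ⟨C, hC⟩ := Finite.bddAbove_range fun t : Fin m × Fin n × Fin n => |wt A B t.1 t.2.1 t.2.2|
  exact ⟨C, fun i j j' => hC ⟨(i, j, j'), rfl⟩⟩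

section Play

variable {σ : MaxStrategy m n} {τ : MinStrategy m n} {j0 : Fin n}

theorem lastState_append_singleton (h : List (Fin m × Fin n)) (e : Fin m × Fin n) :
    lastState j0 (h ++ [e]) = e.2 := by
  simp [lastState]

theorem playHist_succ (p : ℕ) :
    playHist σ τ j0 (p + 1) = playHist σ τ j0 p ++ [(playI σ τ j0 p, playJ σ τ j0 (p + 1))] :=
  rfl

theorem lastState_playHist (p : ℕ) : lastState j0 (playHist σ τ j0 p) = playJ σ τ j0 p := by
  cases p with
  | zero => rfl
  | succ p => rw [playHist_succ, lastState_append_singleton]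

theorem validHist_append_singleton {h : List (Fin m × Fin n)} {i : Fin m} {j' : Fin n}
    (hv : ValidHist A B j0 h) (hi : A i (lastState j0 h) ≠ ⊥) (hj : B i j' ≠ ⊥) :
    ValidHist A B j0 (h ++ [(i, j')]) := by
  intro k hk
  rcases (Nat.lt_succ_iff.1 (by simpa using hk)).lt_or_eq with hlt | rfl
  · simpa [List.getElem_append_left hlt, List.take_append_of_le_length hlt.le] using hv k hlt
  · simpa using And.intro hi hj

theorem validHist_playHist (hσ : ValidMaxStrategy A B σ) (hτ : ValidMinStrategy A B τ) (p : ℕ) :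
    ValidHist A B j0 (playHist σ τ j0 p) := by
  induction p with
  | zero => intro k hk; simp [playHist] at hk
  | succ p ih => exact validHist_append_singleton ih (hτ j0 _ ih) (hσ j0 _ _ ih (hτ j0 _ ih))

theorem playI_ne_bot (hσ : ValidMaxStrategy A B σ) (hτ : ValidMinStrategy A B τ) (p : ℕ) :
    A (playI σ τ j0 p) (playJ σ τ j0 p) ≠ ⊥ := by
  simpa [playI, lastState_playHist] using hτ j0 _ (validHist_playHist hσ hτ p)

theorem playJ_succ_ne_bot (hσ : ValidMaxStrategy A B σ) (hτ : ValidMinStrategy A B τ) (p : ℕ) :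
    B (playI σ τ j0 p) (playJ σ τ j0 (p + 1)) ≠ ⊥ :=
  hσ j0 _ _ (validHist_playHist hσ hτ p) (by simpa [lastState_playHist] using playI_ne_bot hσ hτ p)

theorem meanPayoff_eq_liminf :
    meanPayoff A B σ τ j0 = liminf (fun p : ℕ => 1 / (p : ℝ) * payoffSum A B σ τ j0 p) atTop := by
  simp only [meanPayoff, payoffSum, wt, neg_add_eq_sub]

theorem payoffSum_succ (p : ℕ) : payoffSum A B σ τ j0 (p + 1) =
    payoffSum A B σ τ j0 p + wt A B (playI σ τ j0 p) (playJ σ τ j0 p) (playJ σ τ j0 (p + 1)) :=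
  sum_range_succ _ _

theorem abs_payoffSum_le {C : ℝ} (hC : ∀ i j j', |wt A B i j j'| ≤ C) (p : ℕ) :
    |payoffSum A B σ τ j0 p| ≤ C * p := by
  calc |payoffSum A B σ τ j0 p|
      ≤ ∑ k ∈ range p, |wt A B (playI σ τ j0 k) (playJ σ τ j0 k) (playJ σ τ j0 (k + 1))| :=
        abs_sum_le_sum_abs _ _
    _ ≤ ∑ _k ∈ range p, C := sum_le_sum fun _ _ => hC _ _ _
    _ = C * p := by simp [mul_comm]

end Play

theorem filter_ne_bot_nonempty (hB : ∀ i, ∃ j, B i j ≠ ⊥) (i : Fin m) :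
    (univ.filter fun j => B i j ≠ ⊥).Nonempty :=
  let ⟨j, hj⟩ := hB i; ⟨j, mem_filter.2 ⟨mem_univ j, hj⟩⟩

section BestResponse

variable (x : Fin n → WithBot ℝ) (hB : ∀ i, ∃ j, B i j ≠ ⊥)

def bestResponse (i : Fin m) : Fin n :=
  (exists_max_image _ (fun j => B i j + x j) (filter_ne_bot_nonempty hB i)).choose

theorem bestResponse_spec (i : Fin m) :
    B i (bestResponse x hB i) ≠ ⊥ ∧
      ∀ j, B i j + x j ≤ B i (bestResponse x hB i) + x (bestResponse x hB i) := by
  obtain ⟨hmem, hmax⟩ :=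
    (exists_max_image _ (fun j => B i j + x j) (filter_ne_bot_nonempty hB i)).choose_spec
  refine ⟨(mem_filter.1 hmem).2, fun j => ?_⟩
  by_cases hj : B i j = ⊥
  · simp [hj]
  · exact hmax j (by simpa using hj)

def bestResponseStrategy : MaxStrategy m n := fun _ _ i => bestResponse x hB i

theorem bestResponseStrategy_valid : ValidMaxStrategy A B (bestResponseStrategy x hB) :=
  fun _ _ i _ _ => (bestResponse_spec x hB i).1

variable {x hB}

theorem exists_le_wt_add_bestResponse
    (hfeas : ∀ i, (univ.sup fun j => A i j + x j) ≤ univ.sup fun j => B i j + x j)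
    {i : Fin m} {j : Fin n} {u : ℝ} (hxj : x j = u) (hAij : A i j ≠ ⊥) :
    ∃ v : ℝ, x (bestResponse x hB i) = v ∧ u ≤ wt A B i j (bestResponse x hB i) + v := by
  set j' := bestResponse x hB i
  obtain ⟨α, hα⟩ := WithBot.ne_bot_iff_exists.1 hAij
  obtain ⟨β, hβ⟩ := WithBot.ne_bot_iff_exists.1 (bestResponse_spec x hB i).1
  have key : A i j + x j ≤ B i j' + x j' :=
    (Finset.le_sup (f := fun j => A i j + x j) (mem_univ j)).trans
      ((hfeas i).trans (Finset.sup_le fun k _ => (bestResponse_spec x hB i).2 k))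
  have hx' : x j' ≠ ⊥ := by
    intro h
    simp [h, ← hα, hxj] at key
  obtain ⟨v, hv⟩ := WithBot.ne_bot_iff_exists.1 hx'
  rw [← hα, hxj, ← hβ, ← hv] at key
  norm_cast at key
  exact ⟨v, hv.symm, by rw [wt_eq_of_eq_coe hα.symm hβ.symm]; linarith⟩

theorem exists_le_payoffSum_bestResponseStrategy
    (hfeas : ∀ i, (univ.sup fun j => A i j + x j) ≤ univ.sup fun j => B i j + x j)
    {jbar : Fin n} {u : ℝ} (hx : x jbar = u) {τ : MinStrategy m n}
    (hτ : ValidMinStrategy A B τ) (p : ℕ) :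
    ∃ v : ℝ, x (playJ (bestResponseStrategy x hB) τ jbar p) = v ∧
      u ≤ payoffSum A B (bestResponseStrategy x hB) τ jbar p + v := by
  induction p with
  | zero => exact ⟨u, hx, by simp [payoffSum]⟩
  | succ p ih =>
    obtain ⟨v, hv, hle⟩ := ih
    obtain ⟨v', hv', hle'⟩ := exists_le_wt_add_bestResponse (hB := hB) hfeas hv
      (playI_ne_bot (bestResponseStrategy_valid x hB) hτ p)
    have hj : playJ (bestResponseStrategy x hB) τ jbar (p + 1) =
        bestResponse x hB (playI (bestResponseStrategy x hB) τ jbar p) := rfl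
    refine ⟨v', hv', ?_⟩
    rw [payoffSum_succ, hj]
    linarith

theorem meanPayoff_bestResponseStrategy_nonneg
    (hfeas : ∀ i, (univ.sup fun j => A i j + x j) ≤ univ.sup fun j => B i j + x j)
    {jbar : Fin n} (hx : 0 ≤ x jbar) {τ : MinStrategy m n} (hτ : ValidMinStrategy A B τ) :
    0 ≤ meanPayoff A B (bestResponseStrategy x hB) τ jbar := by
  obtain ⟨u, hu⟩ := WithBot.ne_bot_iff_exists.1 (ne_bot_of_le_ne_bot WithBot.coe_ne_bot hx)
  have hu0 : 0 ≤ u := by rw [← hu] at hx; exact_mod_cast hx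
  obtain ⟨K, hK⟩ := Finite.bddAbove_range fun j => (x j).unbotD 0
  obtain ⟨C, hC⟩ := exists_abs_wt_le (A := A) (B := B)
  rw [meanPayoff_eq_liminf]
  refine liminf_average_nonneg (C := C) (K := K)
    (fun p => (abs_le.1 (abs_payoffSum_le hC p)).2) fun p => ?_
  obtain ⟨v, hv, hle⟩ := exists_le_payoffSum_bestResponseStrategy hfeas hu.symm hτ p
  have hvK : v ≤ K := by simpa [hv] using hK ⟨playJ (bestResponseStrategy x hB) τ jbar p, rfl⟩
  linarith

end BestResponse

theorem exists_feasible_of_energy {jbar : Fin n} {c₀ : ℝ} (Q : Fin n → ℝ → Prop)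
    (hQ : ∃ L, ∀ j c, Q j c → L ≤ c)
    (hstep : ∀ j c i, Q j c → A i j ≠ ⊥ → ∃ j', B i j' ≠ ⊥ ∧ Q j' (c + wt A B i j j'))
    (hbar : Q jbar c₀) :
    ∃ x : Fin n → WithBot ℝ, 0 ≤ x jbar ∧
      ∀ i, (univ.sup fun j => A i j + x j) ≤ univ.sup fun j => B i j + x j := by
  classical
  obtain ⟨L, hL⟩ := hQ
  set u : Fin n → ℝ := fun j => sInf {c | Q j c}
  have hu_le : ∀ j c, Q j c → u j ≤ c := fun j c hc => csInf_le ⟨L, fun c hc => hL j c hc⟩ hc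
  set x : Fin n → WithBot ℝ := fun j => if ∃ c, Q j c then ((u jbar - u j : ℝ) : WithBot ℝ) else ⊥
  have hx : ∀ j c, Q j c → x j = ((u jbar - u j : ℝ) : WithBot ℝ) := fun j c hc => if_pos ⟨c, hc⟩
  refine ⟨x, by simp [hx jbar c₀ hbar], fun i => Finset.sup_le fun j _ => ?_⟩
  set S := univ.sup fun j' => B i j' + x j'
  by_cases hj : ∃ c, Q j c
  swap
  · simp [x, hj]
  by_cases hAij : A i j = ⊥
  · simp [hAij]
  obtain ⟨α, hα⟩ := WithBot.ne_bot_iff_exists.1 hAij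
  have hlevel : ∀ c, Q j c → ((α + u jbar - c : ℝ) : WithBot ℝ) ≤ S := by
    intro c hc
    obtain ⟨j', hB', hQ'⟩ := hstep j c i hc hAij
    obtain ⟨β, hβ⟩ := WithBot.ne_bot_iff_exists.1 hB'
    have hu' := hu_le j' _ hQ'
    rw [wt_eq_of_eq_coe hα.symm hβ.symm] at hu'
    calc ((α + u jbar - c : ℝ) : WithBot ℝ) ≤ ((β + (u jbar - u j') : ℝ) : WithBot ℝ) :=
          WithBot.coe_le_coe.2 (by linarith)
      _ = B i j' + x j' := by rw [hx j' _ hQ', ← hβ, WithBot.coe_add]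
      _ ≤ S := Finset.le_sup (f := fun j' => B i j' + x j') (mem_univ j')
  obtain ⟨c, hc⟩ := hj
  obtain ⟨s, hs⟩ :=
    WithBot.ne_bot_iff_exists.1 (ne_bot_of_le_ne_bot WithBot.coe_ne_bot (hlevel c hc))
  have hus : α + u jbar - s ≤ u j := le_csInf ⟨c, hc⟩ fun c hc => by
    have := hlevel c hc
    rw [← hs, WithBot.coe_le_coe] at this
    linarith
  rw [← hα, hx j c hc, ← hs, ← WithBot.coe_add, WithBot.coe_le_coe]
  linarith

section LoopErasure

variable (A B)

def weights : Finset ℝ := univ.image fun t : Fin m × Fin n × Fin n => wt A B t.1 t.2.1 t.2.2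

def pathValues : Finset ℝ := (range (n + 1)).biUnion fun k => k • weights A B

/-- A loop-erased path is stored top first, each state paired with the payoff accumulated along
the path up to it. -/
def loopErasedStep (i : Fin m) (j' : Fin n) : List (Fin n × ℝ) → List (Fin n × ℝ)
  | [] => []
  | a :: l =>
    if j' ∈ (a :: l).map Prod.fst then (a :: l).dropWhile fun e => e.1 ≠ j'
    else (j', a.2 + wt A B i a.1 j') :: a :: l

def loopErasedPath (j0 : Fin n) (h : List (Fin m × Fin n)) : List (Fin n × ℝ) :=
  h.foldl (fun st e => loopErasedStep A B e.1 e.2 st) [(j0, 0)]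

structure GoodStack (P : List (Fin n × ℝ) → Prop) (st : List (Fin n × ℝ)) : Prop where
  nodup : (st.map Prod.fst).Nodup
  suffix : ∀ a l, a :: l <:+ st → a.2 ∈ l.length • weights A B ∧ P (a :: l)

variable {A B}

theorem wt_mem_weights (i : Fin m) (j j' : Fin n) : wt A B i j j' ∈ weights A B :=
  mem_image_of_mem _ (mem_univ (i, j, j'))

theorem loopErasedStep_of_not_mem {i : Fin m} {j' : Fin n} {a : Fin n × ℝ} {l : List (Fin n × ℝ)}
    (hj : j' ∉ (a :: l).map Prod.fst) :
    loopErasedStep A B i j' (a :: l) = (j', a.2 + wt A B i a.1 j') :: a :: l :=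
  if_neg hj

theorem loopErasedStep_of_mem {i : Fin m} {a e : Fin n × ℝ} {l : List (Fin n × ℝ)}
    (hnd : ((a :: l).map Prod.fst).Nodup) (he : e ∈ a :: l) :
    ∃ q, loopErasedStep A B i e.1 (a :: l) = e :: q ∧ e :: q <:+ a :: l := by
  obtain ⟨q, hq⟩ := List.dropWhile_fst_ne_eq_cons hnd he
  refine ⟨q, ?_, hq ▸ List.dropWhile_suffix _⟩
  rw [loopErasedStep, if_pos (List.mem_map_of_mem he), hq]

theorem loopErasedPath_append_singleton (j0 : Fin n) (h : List (Fin m × Fin n))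
    (e : Fin m × Fin n) :
    loopErasedPath A B j0 (h ++ [e]) = loopErasedStep A B e.1 e.2 (loopErasedPath A B j0 h) := by
  rw [loopErasedPath, List.foldl_append]
  rfl

theorem loopErasedPath_eq_cons (j0 : Fin n) (h : List (Fin m × Fin n)) :
    ∃ a l, loopErasedPath A B j0 h = a :: l ∧ a.1 = lastState j0 h ∧
      ((a :: l).map Prod.fst).Nodup := by
  induction h using List.reverseRecOn with
  | nil => exact ⟨(j0, 0), [], rfl, rfl, by simp⟩
  | append_singleton h e ih =>
    obtain ⟨a, l, hst, -, hnd⟩ := ih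
    rw [loopErasedPath_append_singleton, hst, lastState_append_singleton]
    by_cases hj : e.2 ∈ (a :: l).map Prod.fst
    · obtain ⟨e', he', he'e⟩ := List.mem_map.1 hj
      obtain ⟨q, hq, hsuf⟩ := loopErasedStep_of_mem (i := e.1) hnd he'
      rw [he'e] at hq
      exact ⟨e', q, hq, he'e, hnd.sublist (hsuf.map Prod.fst).sublist⟩
    · exact ⟨_, _, loopErasedStep_of_not_mem hj, rfl, List.nodup_cons.2 ⟨hj, hnd⟩⟩

namespace GoodStack

variable {P : List (Fin n × ℝ) → Prop} {st s : List (Fin n × ℝ)} {a : Fin n × ℝ}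
  {l : List (Fin n × ℝ)}

theorem of_suffix (h : GoodStack A B P st) (hs : s <:+ st) : GoodStack A B P s :=
  ⟨h.nodup.sublist (hs.map Prod.fst).sublist, fun a l hal => h.suffix a l (hal.trans hs)⟩

theorem singleton {j : Fin n} (hP : P [(j, 0)]) : GoodStack A B P [(j, 0)] := by
  refine ⟨by simp, fun a l hal => ?_⟩
  obtain ⟨rfl, rfl⟩ := List.cons_eq_cons.1 ((List.suffix_cons_iff.1 hal).resolve_right (by simp))
  simpa using hP

theorem push (h : GoodStack A B P (a :: l)) {i : Fin m} {j' : Fin n}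
    (hj : j' ∉ (a :: l).map Prod.fst) (hP : P ((j', a.2 + wt A B i a.1 j') :: a :: l)) :
    GoodStack A B P ((j', a.2 + wt A B i a.1 j') :: a :: l) := by
  refine ⟨List.nodup_cons.2 ⟨hj, h.nodup⟩, fun b q hbq => ?_⟩
  rcases List.suffix_cons_iff.1 hbq with heq | hsuf
  · obtain ⟨rfl, rfl⟩ := List.cons_eq_cons.1 heq
    refine ⟨?_, hP⟩
    rw [List.length_cons, succ_nsmul]
    exact add_mem_add (h.suffix a l List.suffix_rfl).1 (wt_mem_weights i a.1 j')
  · exact h.suffix b q hsuf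

theorem length_le (h : GoodStack A B P st) : st.length ≤ n := by
  simpa using h.nodup.length_le_card

theorem mem_pathValues (h : GoodStack A B P (a :: l)) : a.2 ∈ pathValues A B :=
  mem_biUnion.2 ⟨l.length, mem_range.2 (by have := h.length_le; simp at this; omega),
    (h.suffix a l List.suffix_rfl).1⟩

theorem add_wt_mem_pathValues (h : GoodStack A B P (a :: l)) (i : Fin m) (j' : Fin n) :
    a.2 + wt A B i a.1 j' ∈ pathValues A B := by
  refine mem_biUnion.2 ⟨l.length + 1, mem_range.2 (by have := h.length_le; simp at this; omega), ?_⟩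
  rw [succ_nsmul]
  exact add_mem_add (h.suffix a l List.suffix_rfl).1 (wt_mem_weights i a.1 j')

end GoodStack

end LoopErasure

section FirstCycleGame

variable (A B)

def WinningAnswer (W : List (Fin n × ℝ) → Prop) (a : Fin n × ℝ) (l : List (Fin n × ℝ))
    (i : Fin m) (j' : Fin n) : Prop :=
  B i j' ≠ ⊥ ∧
    if j' ∈ (a :: l).map Prod.fst then ∀ e ∈ a :: l, e.1 = j' → e.2 ≤ a.2 + wt A B i a.1 j'
    else W ((j', a.2 + wt A B i a.1 j') :: a :: l)

def firstCycleStep : (List (Fin n × ℝ) → Prop) →o (List (Fin n × ℝ) → Prop) where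
  toFun W
    | [] => False
    | a :: l => ∀ i, A i a.1 ≠ ⊥ → ∃ j', WinningAnswer A B W a l i j'
  monotone' W W' hW := by
    rintro (_ | ⟨a, l⟩) h
    · exact h
    · intro i hi
      obtain ⟨j', hB, hj'⟩ := h i hi
      refine ⟨j', hB, ?_⟩
      split_ifs at hj' ⊢
      exacts [hj', hW _ hj']

/-- Only the fixed-point equation `maxWinsFirstCycle_cons_iff` is used, so any fixed point of
`firstCycleStep` would do. -/
def MaxWinsFirstCycle : List (Fin n × ℝ) → Prop := OrderHom.lfp (firstCycleStep A B)

variable {A B}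

theorem maxWinsFirstCycle_cons_iff {a : Fin n × ℝ} {l : List (Fin n × ℝ)} :
    MaxWinsFirstCycle A B (a :: l) ↔
      ∀ i, A i a.1 ≠ ⊥ → ∃ j', WinningAnswer A B (MaxWinsFirstCycle A B) a l i j' :=
  (Iff.of_eq (congrFun (OrderHom.map_lfp (firstCycleStep A B)) (a :: l))).symm

theorem GoodStack.exists_winningAnswer {a : Fin n × ℝ} {l : List (Fin n × ℝ)}
    (h : GoodStack A B (MaxWinsFirstCycle A B) (a :: l)) {i : Fin m} (hi : A i a.1 ≠ ⊥) :
    ∃ j', B i j' ≠ ⊥ ∧ ∃ b q, GoodStack A B (MaxWinsFirstCycle A B) (b :: q) ∧ b.1 = j' ∧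
      b.2 ≤ a.2 + wt A B i a.1 j' := by
  obtain ⟨j', hB, hj'⟩ := maxWinsFirstCycle_cons_iff.1 (h.suffix a l List.suffix_rfl).2 i hi
  refine ⟨j', hB, ?_⟩
  split_ifs at hj' with hmem
  · obtain ⟨e, he, rfl⟩ := List.mem_map.1 hmem
    obtain ⟨s, t, hst⟩ := List.mem_iff_append.1 he
    exact ⟨e, t, h.of_suffix ⟨s, hst.symm⟩, rfl, hj' e he rfl⟩
  · exact ⟨_, _, h.push hmem hj', rfl, le_rfl⟩

theorem exists_feasible_of_maxWinsFirstCycle {jbar : Fin n}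
    (hW : MaxWinsFirstCycle A B [(jbar, 0)]) :
    ∃ x : Fin n → WithBot ℝ, 0 ≤ x jbar ∧
      ∀ i, (univ.sup fun j => A i j + x j) ≤ univ.sup fun j => B i j + x j := by
  obtain ⟨L, hL⟩ := (pathValues A B).bddBelow
  refine exists_feasible_of_energy
    (fun j c => ∃ a l, GoodStack A B (MaxWinsFirstCycle A B) (a :: l) ∧ a.1 = j ∧ a.2 ≤ c)
    ⟨L, fun j c ⟨a, l, h, _, hc⟩ => (hL h.mem_pathValues).trans hc⟩ ?_
    ⟨(jbar, 0), [], GoodStack.singleton hW, rfl, le_rfl⟩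
  rintro j c i ⟨a, l, h, rfl, hc⟩ hi
  obtain ⟨j', hB, b, q, hbq, hb, hle⟩ := h.exists_winningAnswer hi
  exact ⟨j', hB, b, q, hbq, hb, hle.trans (by linarith)⟩

variable (A B) (hA : ∀ j, ∃ i, A i j ≠ ⊥)

open Classical in
def refutingMove (j0 : Fin n) : List (Fin n × ℝ) → Fin m
  | [] => (hA j0).choose
  | a :: l =>
    if hr : ∃ i, A i a.1 ≠ ⊥ ∧ ∀ j', ¬ WinningAnswer A B (MaxWinsFirstCycle A B) a l i j'
    then hr.choose else (hA a.1).choose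

def firstCycleStrategy : MinStrategy m n := fun j0 h =>
  refutingMove A B hA j0 (loopErasedPath A B j0 h)

variable {A B hA}

theorem refutingMove_ne_bot (j0 : Fin n) (a : Fin n × ℝ) (l : List (Fin n × ℝ)) :
    A (refutingMove A B hA j0 (a :: l)) a.1 ≠ ⊥ := by
  simp only [refutingMove]
  split_ifs with hr
  exacts [hr.choose_spec.1, (hA a.1).choose_spec]

theorem not_winningAnswer_refutingMove {j0 : Fin n} {a : Fin n × ℝ} {l : List (Fin n × ℝ)}
    (hW : ¬ MaxWinsFirstCycle A B (a :: l)) (j' : Fin n) :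
    ¬ WinningAnswer A B (MaxWinsFirstCycle A B) a l (refutingMove A B hA j0 (a :: l)) j' := by
  have hr : ∃ i, A i a.1 ≠ ⊥ ∧ ∀ j', ¬ WinningAnswer A B (MaxWinsFirstCycle A B) a l i j' := by
    simpa [maxWinsFirstCycle_cons_iff] using hW
  simp only [refutingMove]
  rw [dif_pos hr]
  exact hr.choose_spec.2 j'

theorem firstCycleStrategy_valid : ValidMinStrategy A B (firstCycleStrategy A B hA) := by
  intro j0 h _
  obtain ⟨a, l, hst, htop, -⟩ := loopErasedPath_eq_cons (A := A) (B := B) j0 h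
  rw [← htop]
  show A (refutingMove A B hA j0 (loopErasedPath A B j0 h)) a.1 ≠ ⊥
  rw [hst]
  exact refutingMove_ne_bot j0 a l

theorem GoodStack.loopErasedStep_of_not_winningAnswer {a : Fin n × ℝ} {l : List (Fin n × ℝ)}
    (h : GoodStack A B (fun s => ¬ MaxWinsFirstCycle A B s) (a :: l)) {i : Fin m} {j' : Fin n}
    (hi : ¬ WinningAnswer A B (MaxWinsFirstCycle A B) a l i j') (hB : B i j' ≠ ⊥) :
    ∃ b q, loopErasedStep A B i j' (a :: l) = b :: q ∧
      GoodStack A B (fun s => ¬ MaxWinsFirstCycle A B s) (b :: q) ∧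
      ((q = a :: l ∧ b.2 = a.2 + wt A B i a.1 j') ∨ a.2 + wt A B i a.1 j' < b.2) := by
  have hlose := not_and.1 hi hB
  by_cases hmem : j' ∈ (a :: l).map Prod.fst
  · rw [if_pos hmem] at hlose
    push Not at hlose
    obtain ⟨e, he, rfl, hlt⟩ := hlose
    obtain ⟨q, hq, hsuf⟩ := loopErasedStep_of_mem (i := i) h.nodup he
    exact ⟨e, q, hq, h.of_suffix hsuf, Or.inr hlt⟩
  · rw [if_neg hmem] at hlose
    exact ⟨_, _, loopErasedStep_of_not_mem hmem, h.push hmem hlose, Or.inl ⟨rfl, rfl⟩⟩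

/-- `cnt` counts the cycles erased so far. -/
theorem firstCycleStrategy_invariant {jbar : Fin n} (hW : ¬ MaxWinsFirstCycle A B [(jbar, 0)])
    {σ : MaxStrategy m n} (hσ : ValidMaxStrategy A B σ) {δ : ℝ}
    (hδ : ∀ c ∈ pathValues A B - pathValues A B, c < 0 → c ≤ -δ) (p : ℕ) :
    ∃ a l, ∃ cnt : ℕ,
      loopErasedPath A B jbar (playHist σ (firstCycleStrategy A B hA) jbar p) = a :: l ∧
      GoodStack A B (fun s => ¬ MaxWinsFirstCycle A B s) (a :: l) ∧ p ≤ l.length + n * cnt ∧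
      payoffSum A B σ (firstCycleStrategy A B hA) jbar p + δ * cnt ≤ a.2 := by
  set τ := firstCycleStrategy A B hA
  induction p with
  | zero => exact ⟨(jbar, 0), [], 0, rfl, GoodStack.singleton hW, by simp, by simp [payoffSum]⟩
  | succ p ih =>
    obtain ⟨a, l, cnt, hst, h, hlen, hsum⟩ := ih
    have htop : a.1 = playJ σ τ jbar p := by
      obtain ⟨a', l', hst', htop', -⟩ :=
        loopErasedPath_eq_cons (A := A) (B := B) jbar (playHist σ τ jbar p)
      rw [hst, List.cons_eq_cons] at hst'
      rw [hst'.1, htop', lastState_playHist]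
    have hi : playI σ τ jbar p = refutingMove A B hA jbar (a :: l) := by
      rw [← hst]; rfl
    have hB := playJ_succ_ne_bot (j0 := jbar) hσ (firstCycleStrategy_valid (hA := hA)) p
    obtain ⟨b, q, hstep, h', hcase⟩ := h.loopErasedStep_of_not_winningAnswer
      (hi ▸ not_winningAnswer_refutingMove (h.suffix a l List.suffix_rfl).2 _) hB
    have hpath : loopErasedPath A B jbar (playHist σ τ jbar (p + 1)) = b :: q := by
      rw [playHist_succ, loopErasedPath_append_singleton, hst]
      exact hstep
    have hlen' := h.length_le
    rw [payoffSum_succ, ← htop]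
    rcases hcase with ⟨rfl, hb⟩ | hlt
    · exact ⟨b, a :: l, cnt, hpath, h', by simp at hlen' ⊢; omega, by linarith⟩
    · have hcycle := hδ _ (sub_mem_sub (h.add_wt_mem_pathValues _ _) h'.mem_pathValues)
        (by linarith)
      refine ⟨b, q, cnt + 1, hpath, h', ?_, by push_cast; linarith⟩
      simp at hlen'
      rw [mul_add_one]
      omega

theorem meanPayoff_firstCycleStrategy_neg {jbar : Fin n}
    (hW : ¬ MaxWinsFirstCycle A B [(jbar, 0)]) {σ : MaxStrategy m n}
    (hσ : ValidMaxStrategy A B σ) : meanPayoff A B σ (firstCycleStrategy A B hA) jbar < 0 := by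
  obtain ⟨δ, hδ, hgap⟩ := (pathValues A B - pathValues A B).exists_pos_forall_le_neg_of_neg
  obtain ⟨M, hM⟩ := (pathValues A B).bddAbove
  obtain ⟨C, hC⟩ := exists_abs_wt_le (A := A) (B := B)
  have hn : (0 : ℝ) < n := by exact_mod_cast jbar.pos
  rw [meanPayoff_eq_liminf]
  refine liminf_average_neg (C := C) (a := M + δ) (fun p => (abs_le.1 (abs_payoffSum_le hC p)).1)
    (div_pos hδ hn) fun p => ?_
  obtain ⟨a, l, cnt, -, h, hlen, hsum⟩ := firstCycleStrategy_invariant hW hσ hgap p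
  have haM : a.2 ≤ M := hM h.mem_pathValues
  have hl : (l.length : ℝ) ≤ n := by
    have := h.length_le
    simp only [List.length_cons] at this
    exact_mod_cast this.trans' (Nat.le_succ _)
  have hp : δ / n * p ≤ δ * cnt + δ := by
    rw [div_mul_eq_mul_div, div_le_iff₀ hn]
    calc δ * p ≤ δ * (l.length + n * cnt) :=
          mul_le_mul_of_nonneg_left (by exact_mod_cast hlen) hδ.le
      _ ≤ (δ * cnt + δ) * n := by nlinarith [mul_le_mul_of_nonneg_left hl hδ.le]
  linarith

end FirstCycleGame

end MeanPayoffGame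

open MeanPayoffGame

/-- Player Max can guarantee a nonnegative mean payoff from the initial
state `j̄` if, and only if, there is a solution `x` of the system of tropical linear
inequalities `x j̄ ≥ 0`, `A ⊙ x ≤ B ⊙ x`. -/
theorem maxWinning_iff_tropically_feasible
    (A B : Matrix (Fin m) (Fin n) (WithBot ℝ))
    (hA : ∀ j, ∃ i, A i j ≠ ⊥) (hB : ∀ i, ∃ j, B i j ≠ ⊥) (jbar : Fin n) :
    (∃ σ : MaxStrategy m n, ValidMaxStrategy A B σ ∧
        ∀ τ : MinStrategy m n, ValidMinStrategy A B τ →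
          0 ≤ meanPayoff A B σ τ jbar) ↔
      (∃ x : Fin n → WithBot ℝ, 0 ≤ x jbar ∧
        ∀ i, (univ.sup fun j => A i j + x j) ≤ univ.sup fun j => B i j + x j) := by
  constructor
  · rintro ⟨σ, hσ, hwin⟩
    by_cases hW : MaxWinsFirstCycle A B [(jbar, 0)]
    · exact exists_feasible_of_maxWinsFirstCycle hW
    · exact absurd (hwin _ (firstCycleStrategy_valid (hA := hA)))
        (not_le.2 (meanPayoff_firstCycleStrategy_neg hW hσ))
  · rintro ⟨x, hx, hfeas⟩
    exact ⟨bestResponseStrategy x hB, bestResponseStrategy_valid x hB,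
      fun τ hτ => meanPayoff_bestResponseStrategy_nonneg hfeas hx hτ⟩

end
end

section
/- Let 𝐌 : Matrix (Fin k) (Fin k) K and let M : Matrix (Fin k) (Fin k) (WithBot G) be the matrix M i j := val (𝐌 i j). If M is tropically nonsingular with unique optimal permutation σ, then det 𝐌 ≠ 0, val (det 𝐌) = tper M, and the leading coefficient of det 𝐌 has the same sign as Equiv.Perm.sign σ · Π_i (sign of the leading coefficient of 𝐌 i (σ i)). -/
noncomputable section
open scoped Classical

variable {G : Type*} [AddCommGroup G] [LinearOrder G] [IsOrderedAddMonoid G]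

/-- The valuation `val : HahnSeries G ℝ → WithBot G`, with `val 𝐱 = -𝐱.order` for `𝐱 ≠ 0`
and `val 0 = ⊥`. -/
def hahnVal (x : HahnSeries G ℝ) : WithBot G :=
  if x = 0 then ⊥ else ↑(-x.order)

/-- Tropical permanent of a square matrix over the max-plus semiring `WithBot G`:
`tper M = ⊔_σ Σ_i M i (σ i)`, sums taken in `WithBot G` (`⊥` is absorbing for `+`). -/
def tper {k : ℕ} (M : Matrix (Fin k) (Fin k) (WithBot G)) : WithBot G :=
  Finset.univ.sup (fun σ : Equiv.Perm (Fin k) => ∑ i, M i (σ i))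

/-
The Leibniz expansion writes `det MK` as a signed sum over permutations `π` of the products
`∏ i, MK i (π i)`, and the valuation of such a product is `∑ i, M i (π i)`. Tropical
nonsingularity says the term of `σ` has strictly larger valuation (smaller order) than every
other term, so no cancellation can reach its leading monomial: the determinant has the order
and, up to the sign of `σ`, the leading coefficient of that single term, and the leading
coefficient of a product is the product of the leading coefficients.
-/

namespace Real

theorem sign_eq_coe_sign (r : ℝ) : Real.sign r = ((SignType.sign r : SignType) : ℝ) := by
  rcases lt_trichotomy r 0 with hr | rfl | hr
  · simp [Real.sign_of_neg hr, hr]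
  · simp
  · simp [Real.sign_of_pos hr, hr]

theorem sign_prod {ι : Type*} (s : Finset ι) (f : ι → ℝ) :
    Real.sign (∏ i ∈ s, f i) = ∏ i ∈ s, Real.sign (f i) := by
  simp only [sign_eq_coe_sign]
  exact map_prod (SignType.castHom.comp signHom : ℝ →*₀ ℝ) f s

theorem sign_units_int_smul (u : ℤˣ) (r : ℝ) : Real.sign (u • r) = (u : ℤ) * Real.sign r := by
  rcases Int.units_eq_one_or u with rfl | rfl <;> simp [Real.sign_neg]

end Real

namespace Matrix

theorem det_eq_sum_sign_smul_prod {n R : Type*} [Fintype n] [DecidableEq n] [CommRing R]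
    (A : Matrix n n R) : A.det = ∑ π : Equiv.Perm n, Equiv.Perm.sign π • ∏ i, A i (π i) := by
  rw [← det_transpose, det_apply]
  rfl

end Matrix

namespace HahnSeries

section Sum

variable {Γ R ι : Type*} [LinearOrder Γ]

theorem orderTop_units_int_smul [AddCommGroup R] (u : ℤˣ) (x : HahnSeries Γ R) :
    (u • x).orderTop = x.orderTop := by
  rcases Int.units_eq_one_or u with rfl | rfl <;> simp [orderTop_neg]

theorem leadingCoeff_units_int_smul [AddCommGroup R] (u : ℤˣ) (x : HahnSeries Γ R) :
    (u • x).leadingCoeff = u • x.leadingCoeff := by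
  rcases Int.units_eq_one_or u with rfl | rfl <;> simp [leadingCoeff_neg]

variable [AddCommMonoid R]

theorem lt_orderTop_sum {s : Finset ι} {f : ι → HahnSeries Γ R} {c : WithTop Γ} (hc : c ≠ ⊤)
    (h : ∀ i ∈ s, c < (f i).orderTop) : c < (∑ i ∈ s, f i).orderTop :=
  Finset.sum_induction f (fun x => c < x.orderTop)
    (fun _ _ hx hy => (lt_min hx hy).trans_le min_orderTop_le_orderTop_add)
    (by rwa [orderTop_zero, lt_top_iff_ne_top]) h

variable {s : Finset ι} {f : ι → HahnSeries Γ R} {a : ι}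

theorem sum_eq_self_or_orderTop_lt_sum_erase (ha : a ∈ s)
    (h : ∀ b ∈ s, b ≠ a → (f a).orderTop < (f b).orderTop) :
    ∑ b ∈ s, f b = f a ∨ (f a).orderTop < (∑ b ∈ s.erase a, f b).orderTop := by
  by_cases h0 : f a = 0
  · refine .inl (Finset.sum_eq_single_of_mem a ha fun b hb hba => ?_)
    simpa [h0] using h b hb hba
  · exact .inr (lt_orderTop_sum (orderTop_ne_top.2 h0)
      fun b hb => h b (Finset.mem_of_mem_erase hb) (Finset.ne_of_mem_erase hb))

theorem orderTop_sum_of_forall_lt (ha : a ∈ s)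
    (h : ∀ b ∈ s, b ≠ a → (f a).orderTop < (f b).orderTop) :
    (∑ b ∈ s, f b).orderTop = (f a).orderTop := by
  rcases sum_eq_self_or_orderTop_lt_sum_erase ha h with hs | hlt
  · rw [hs]
  · rw [← Finset.add_sum_erase s f ha, orderTop_add_eq_left hlt]

theorem leadingCoeff_sum_of_forall_lt (ha : a ∈ s)
    (h : ∀ b ∈ s, b ≠ a → (f a).orderTop < (f b).orderTop) :
    (∑ b ∈ s, f b).leadingCoeff = (f a).leadingCoeff := by
  rcases sum_eq_self_or_orderTop_lt_sum_erase ha h with hs | hlt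
  · rw [hs]
  · rw [← Finset.add_sum_erase s f ha, leadingCoeff_add_eq_left hlt]

end Sum

section Det

variable {Γ R n : Type*} [AddCommMonoid Γ] [LinearOrder Γ] [IsOrderedCancelAddMonoid Γ]
  [CommRing R] [Fintype n] [DecidableEq n] {A : Matrix n n (HahnSeries Γ R)} {σ : Equiv.Perm n}

theorem orderTop_det_of_forall_lt
    (h : ∀ π ≠ σ, (∏ i, A i (σ i)).orderTop < (∏ i, A i (π i)).orderTop) :
    A.det.orderTop = (∏ i, A i (σ i)).orderTop := by
  rw [Matrix.det_eq_sum_sign_smul_prod, orderTop_sum_of_forall_lt (Finset.mem_univ σ),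
    orderTop_units_int_smul]
  intro π _ hπ
  simpa only [orderTop_units_int_smul] using h π hπ

theorem leadingCoeff_det_of_forall_lt
    (h : ∀ π ≠ σ, (∏ i, A i (σ i)).orderTop < (∏ i, A i (π i)).orderTop) :
    A.det.leadingCoeff = Equiv.Perm.sign σ • (∏ i, A i (σ i)).leadingCoeff := by
  rw [Matrix.det_eq_sum_sign_smul_prod, leadingCoeff_sum_of_forall_lt (Finset.mem_univ σ),
    leadingCoeff_units_int_smul]
  intro π _ hπ
  simpa only [orderTop_units_int_smul] using h π hπ

end Det

theorem leadingCoeff_prod {Γ R ι : Type*} [AddCommMonoid Γ] [LinearOrder Γ]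
    [IsOrderedCancelAddMonoid Γ] [CommSemiring R] [NoZeroDivisors R] (s : Finset ι)
    (f : ι → HahnSeries Γ R) : (∏ i ∈ s, f i).leadingCoeff = ∏ i ∈ s, (f i).leadingCoeff := by
  classical
  induction s using Finset.induction_on with
  | empty => simp [leadingCoeff_one]
  | insert a s ha ih => rw [Finset.prod_insert ha, Finset.prod_insert ha, leadingCoeff_mul, ih]

end HahnSeries

theorem hahnVal_le_hahnVal_iff {x y : HahnSeries G ℝ} :
    hahnVal x ≤ hahnVal y ↔ y.orderTop ≤ x.orderTop := by
  by_cases hx : x = 0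
  · simp [hahnVal, hx]
  by_cases hy : y = 0
  · simp [hahnVal, hx, hy]
  rw [hahnVal, hahnVal, if_neg hx, if_neg hy, ← HahnSeries.order_eq_orderTop_of_ne_zero hx,
    ← HahnSeries.order_eq_orderTop_of_ne_zero hy, WithBot.coe_le_coe, WithTop.coe_le_coe,
    neg_le_neg_iff]

theorem hahnVal_lt_hahnVal_iff {x y : HahnSeries G ℝ} :
    hahnVal x < hahnVal y ↔ y.orderTop < x.orderTop := by
  simp only [lt_iff_not_ge, hahnVal_le_hahnVal_iff]

theorem hahnVal_eq_of_orderTop_eq {x y : HahnSeries G ℝ} (h : x.orderTop = y.orderTop) :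
    hahnVal x = hahnVal y :=
  le_antisymm (hahnVal_le_hahnVal_iff.2 h.ge) (hahnVal_le_hahnVal_iff.2 h.le)

theorem hahnVal_mul (x y : HahnSeries G ℝ) : hahnVal (x * y) = hahnVal x + hahnVal y := by
  by_cases hx : x = 0
  · simp [hahnVal, hx]
  by_cases hy : y = 0
  · simp [hahnVal, hy]
  rw [hahnVal, hahnVal, hahnVal, if_neg hx, if_neg hy, if_neg (mul_ne_zero hx hy),
    HahnSeries.order_mul hx hy, neg_add, WithBot.coe_add]

theorem hahnVal_prod {ι : Type*} (s : Finset ι) (f : ι → HahnSeries G ℝ) :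
    hahnVal (∏ i ∈ s, f i) = ∑ i ∈ s, hahnVal (f i) := by
  induction s using Finset.induction_on with
  | empty => simp [hahnVal]
  | insert a s ha ih => rw [Finset.prod_insert ha, Finset.sum_insert ha, hahnVal_mul, ih]

/-- If the matrix `M = val ∘ MK` of valuations is tropically nonsingular
with unique optimal permutation `σ`, then `det MK ≠ 0`, `val (det MK) = tper M`, and the
leading coefficient of `det MK` has the same sign as
`sign σ · Π_i sign (leading coefficient of MK i (σ i))`. -/
theorem det_of_tropically_nonsingular (k : ℕ)
    (MK : Matrix (Fin k) (Fin k) (HahnSeries G ℝ))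
    (M : Matrix (Fin k) (Fin k) (WithBot G))
    (hM : ∀ i j, M i j = hahnVal (MK i j))
    (hbot : tper M ≠ ⊥)
    (σ : Equiv.Perm (Fin k))
    (hσ : ∑ i, M i (σ i) = tper M)
    (huniq : ∀ π : Equiv.Perm (Fin k), ∑ i, M i (π i) = tper M → π = σ) :
    MK.det ≠ 0 ∧
    hahnVal MK.det = tper M ∧
    Real.sign (MK.det.coeff MK.det.order) =
      ((Equiv.Perm.sign σ : ℤ) : ℝ) *
        ∏ i, Real.sign ((MK i (σ i)).coeff (MK i (σ i)).order) := by
  have hval : ∀ π : Equiv.Perm (Fin k), hahnVal (∏ i, MK i (π i)) = ∑ i, M i (π i) := fun π => by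
    simp only [hahnVal_prod, hM]
  have hdom : ∀ π ≠ σ, (∏ i, MK i (σ i)).orderTop < (∏ i, MK i (π i)).orderTop := fun π hπ => by
    rw [← hahnVal_lt_hahnVal_iff, hval, hval, hσ]
    exact lt_of_le_of_ne (Finset.le_sup (f := fun π : Equiv.Perm (Fin k) => ∑ i, M i (π i))
      (Finset.mem_univ π)) (mt (huniq π) hπ)
  have hdet : hahnVal MK.det = tper M := by
    rw [hahnVal_eq_of_orderTop_eq (HahnSeries.orderTop_det_of_forall_lt hdom), hval, hσ]
  have hne : MK.det ≠ 0 := fun h0 => hbot (by simpa [hahnVal, h0] using hdet.symm)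
  refine ⟨hne, hdet, ?_⟩
  rw [← HahnSeries.leadingCoeff_eq, HahnSeries.leadingCoeff_det_of_forall_lt hdom,
    Real.sign_units_int_smul, HahnSeries.leadingCoeff_prod, Real.sign_prod]
  simp only [HahnSeries.leadingCoeff_eq]
end
end

section
/- Let 𝔾^≤ ⊆ 𝔾 be the set consisting of ⊥ together with all (α, β) with α ≤ 0. Then 𝔾^≤ is closed under ⊔ and +, and for all x, y ∈ 𝔾^≤: ρ (x ⊔ y) = ρ x ⊔ ρ y, ρ (x + y) = ρ x + ρ y, ρ ⊥ = ⊥, ρ (0, 0) = 0; in particular ρ is monotone on 𝔾^≤ (x ≤ y implies ρ x ≤ ρ y). -/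
/-!
If `v ≤ w` lexicographically and `w` has layer `≤ 0`, then either `v` has negative layer and
`ρ v = ⊥`, or both lie in layer `0` and `ρ` compares second coordinates; so `ρ` is monotone on
`𝔾^≤`, and a monotone map on a linear order preserves `⊔`. Layers add, and two nonpositive layers
sum to `0` exactly when both are `0`, which makes `ρ` additive on `𝔾^≤`.
-/

noncomputable section

/-- The max-plus semiring `𝔾 := WithBot (ℝ ×ₗ ℝ)`. -/
abbrev MaxPlusLex : Type := WithBot (ℝ ×ₗ ℝ)

/-- `ρ : 𝔾 → WithBot ℝ` maps `⊥` to `⊥`, `(0, β)` to `β`, and `(α, β)` with `α < 0` to `⊥`. -/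
def rhoMap : MaxPlusLex → WithBot ℝ :=
  WithBot.recBotCoe ⊥ (fun v => if (ofLex v).1 = 0 then ((ofLex v).2 : WithBot ℝ) else ⊥)

/-- `𝔾^≤` : the set consisting of `⊥` together with all `(α, β)` with `α ≤ 0`. -/
def MaxPlusLexNonpos : Set MaxPlusLex :=
  {x | x = ⊥ ∨ ∃ v : ℝ ×ₗ ℝ, x = ↑v ∧ (ofLex v).1 ≤ 0}

lemma rhoMap_coe (v : ℝ ×ₗ ℝ) :
    rhoMap ↑v = if (ofLex v).1 = 0 then ((ofLex v).2 : WithBot ℝ) else ⊥ := rfl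

lemma bot_mem_maxPlusLexNonpos : (⊥ : MaxPlusLex) ∈ MaxPlusLexNonpos := Or.inl rfl

lemma coe_mem_maxPlusLexNonpos {v : ℝ ×ₗ ℝ} :
    (v : MaxPlusLex) ∈ MaxPlusLexNonpos ↔ (ofLex v).1 ≤ 0 := by
  simp only [MaxPlusLexNonpos, Set.mem_ofPred_eq, WithBot.coe_ne_bot, false_or, WithBot.coe_inj,
    exists_eq_left']

lemma add_mem_maxPlusLexNonpos {x y : MaxPlusLex} (hx : x ∈ MaxPlusLexNonpos)
    (hy : y ∈ MaxPlusLexNonpos) : x + y ∈ MaxPlusLexNonpos := by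
  rcases hx with rfl | ⟨v, rfl, hv⟩
  · simpa using bot_mem_maxPlusLexNonpos
  rcases hy with rfl | ⟨w, rfl, hw⟩
  · simpa using bot_mem_maxPlusLexNonpos
  rw [← WithBot.coe_add, coe_mem_maxPlusLexNonpos, ofLex_add]
  exact add_nonpos hv hw

lemma rhoMap_coe_le_coe {v w : ℝ ×ₗ ℝ} (hw : (ofLex w).1 ≤ 0) (h : v ≤ w) :
    rhoMap ↑v ≤ rhoMap ↑w := by
  rw [rhoMap_coe, rhoMap_coe]
  split_ifs with hv0 hw0
  · rcases Prod.Lex.le_iff.mp h with hlt | ⟨-, h2⟩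
    · linarith
    · exact WithBot.coe_le_coe.mpr h2
  · exact absurd (le_antisymm hw (hv0 ▸ Prod.Lex.monotone_fst v w h)) hw0
  all_goals exact bot_le

lemma rhoMap_le_of_le {x y : MaxPlusLex} (hy : y ∈ MaxPlusLexNonpos) (h : x ≤ y) :
    rhoMap x ≤ rhoMap y := by
  induction x using WithBot.recBotCoe with
  | bot => exact bot_le
  | coe v =>
    rcases hy with rfl | ⟨w, rfl, hw⟩
    · exact absurd h (WithBot.not_coe_le_bot v)
    · exact rhoMap_coe_le_coe hw (WithBot.coe_le_coe.mp h)

lemma rhoMap_monotoneOn : MonotoneOn rhoMap MaxPlusLexNonpos :=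
  fun _ _ _ hy h => rhoMap_le_of_le hy h

lemma rhoMap_add {x y : MaxPlusLex} (hx : x ∈ MaxPlusLexNonpos) (hy : y ∈ MaxPlusLexNonpos) :
    rhoMap (x + y) = rhoMap x + rhoMap y := by
  rcases hx with rfl | ⟨v, rfl, hv⟩
  · rfl
  rcases hy with rfl | ⟨w, rfl, hw⟩
  · simp [rhoMap]
  have layer_add_eq_zero : (ofLex v).1 + (ofLex w).1 = 0 ↔ (ofLex v).1 = 0 ∧ (ofLex w).1 = 0 := by
    constructor
    · intro h
      constructor <;> linarith
    · rintro ⟨hv0, hw0⟩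
      rw [hv0, hw0, add_zero]
  rw [← WithBot.coe_add, rhoMap_coe, rhoMap_coe, rhoMap_coe, ofLex_add, Prod.fst_add,
    Prod.snd_add]
  simp only [layer_add_eq_zero]
  by_cases hv0 : (ofLex v).1 = 0 <;> by_cases hw0 : (ofLex w).1 = 0 <;> simp [hv0, hw0]

/-- `𝔾^≤` is closed under `⊔` and `+`, and on `𝔾^≤` the map `ρ` is a
homomorphism of max-plus semirings: `ρ (x ⊔ y) = ρ x ⊔ ρ y`, `ρ (x + y) = ρ x + ρ y`,
`ρ ⊥ = ⊥`, `ρ (0, 0) = 0`; in particular `ρ` is monotone on `𝔾^≤`. -/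
theorem rhoMap_semiring_hom :
    (∀ x ∈ MaxPlusLexNonpos, ∀ y ∈ MaxPlusLexNonpos, x ⊔ y ∈ MaxPlusLexNonpos) ∧
    (∀ x ∈ MaxPlusLexNonpos, ∀ y ∈ MaxPlusLexNonpos, x + y ∈ MaxPlusLexNonpos) ∧
    (∀ x ∈ MaxPlusLexNonpos, ∀ y ∈ MaxPlusLexNonpos,
      rhoMap (x ⊔ y) = rhoMap x ⊔ rhoMap y ∧ rhoMap (x + y) = rhoMap x + rhoMap y) ∧
    rhoMap ⊥ = ⊥ ∧
    rhoMap ↑(toLex ((0 : ℝ), (0 : ℝ))) = (0 : WithBot ℝ) ∧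
    (∀ x ∈ MaxPlusLexNonpos, ∀ y ∈ MaxPlusLexNonpos, x ≤ y → rhoMap x ≤ rhoMap y) := by
  refine ⟨fun _ hx _ hy => LinearOrder.supClosed _ hx hy,
    fun _ hx _ hy => add_mem_maxPlusLexNonpos hx hy,
    fun _ hx _ hy => ⟨rhoMap_monotoneOn.map_max hx hy, rhoMap_add hx hy⟩,
    rfl, by simp [rhoMap_coe],
    fun _ hx _ hy h => rhoMap_monotoneOn hx hy h⟩

end
end

section
/- Let p, q, k : ℕ, let r : Fin k → Fin p and c : Fin k → Fin q be injective, and let s : Fin p → Fin q → ℝ satisfy s i j ∈ {1, −1} for all i, j. Let δ j : Fin q → ℝ denote the j-th standard basis vector. If σ, π ∈ Equiv.Perm (Fin k) satisfy Σ_i (s (r i) (c (σ i)) * (((r i : ℕ) + 1) : ℝ)) • δ (c (σ i)) = Σ_i (s (r i) (c (π i)) * (((r i : ℕ) + 1) : ℝ)) • δ (c (π i)), as an equality of functions Fin q → ℝ, then σ = π. -/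
/-!
The coordinate `c (σ i)` of the left-hand side is `± (r i + 1)`, since `c ∘ σ` is injective. On the
right the same coordinate is `± (r j + 1)` for the `j` with `π j = σ i`. Taking absolute values
gives `r i = r j`, hence `i = j` and `σ i = π i`.
-/

open Function

theorem sum_smul_single_apply_of_injective {ι κ R : Type*} [Fintype ι] [DecidableEq κ] [Semiring R]
    {f : ι → κ} (hf : Injective f) (w : ι → R) (j : ι) :
    (∑ i, w i • (Pi.single (f i) (1 : R) : κ → R)) (f j) = w j := by
  rw [Finset.sum_apply, Finset.sum_eq_single j]
  · simp
  · intro i _ hij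
    simp [hf.ne (Ne.symm hij)]
  · simp

theorem natCast_eq_of_mul_eq_of_abs_eq_one {R : Type*} [Ring R] [LinearOrder R] [IsStrictOrderedRing R]
    {a b : R} {m n : ℕ} (ha : |a| = 1) (hb : |b| = 1) (h : a * m = b * n) : m = n := by
  simpa [abs_mul, ha, hb] using congrArg abs h

/-- If two permutations `σ, π` of `Fin k` produce the same signed sum of
scaled standard basis vectors `Σ_i (s (r i) (c (σ i)) * (r i + 1)) • δ (c (σ i))`,
where `r`, `c` are injective and every `s i j` is `1` or `-1`, then `σ = π`. -/
theorem perm_eq_of_signed_basis_sum_eq (p q k : ℕ)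
    (r : Fin k → Fin p) (c : Fin k → Fin q)
    (hr : Function.Injective r) (hc : Function.Injective c)
    (s : Fin p → Fin q → ℝ) (hs : ∀ i j, s i j = 1 ∨ s i j = -1)
    (σ π : Equiv.Perm (Fin k))
    (h : ∑ i : Fin k,
          (s (r i) (c (σ i)) * (((r i : ℕ) + 1 : ℕ) : ℝ)) •
            (Pi.single (c (σ i)) (1 : ℝ) : Fin q → ℝ) =
         ∑ i : Fin k,
          (s (r i) (c (π i)) * (((r i : ℕ) + 1 : ℕ) : ℝ)) •
            (Pi.single (c (π i)) (1 : ℝ) : Fin q → ℝ)) :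
    σ = π := by
  have coeff (τ : Equiv.Perm (Fin k)) (j : Fin k) :
      (∑ i : Fin k, (s (r i) (c (τ i)) * (((r i : ℕ) + 1 : ℕ) : ℝ)) •
        (Pi.single (c (τ i)) (1 : ℝ) : Fin q → ℝ)) (c (τ j)) =
      s (r j) (c (τ j)) * (((r j : ℕ) + 1 : ℕ) : ℝ) :=
    sum_smul_single_apply_of_injective (hc.comp τ.injective) _ j
  have hs_abs (i j) : |s i j| = 1 := (abs_eq zero_le_one).2 (hs i j)
  ext1 i
  obtain ⟨j, hπj⟩ := π.surjective (σ i)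
  have hcoeff := congrFun h (c (σ i))
  rw [coeff σ i, ← hπj, coeff π j] at hcoeff
  have hrow : r i = r j := Fin.val_injective <| Nat.succ_injective <|
    natCast_eq_of_mul_eq_of_abs_eq_one (hs_abs _ _) (hs_abs _ _) hcoeff
  rw [← hπj, hr hrow]
end

section
/- Let G be a linearly ordered abelian group, k : ℕ, W : Matrix (Fin (k+1)) (Fin k) (WithBot G) and f : Fin (k+1) → WithBot G. Let M be the (k+1)×(k+1) matrix whose first k columns are those of W and whose last column is f, and for i : Fin (k+1) let W_î : Matrix (Fin k) (Fin k) (WithBot G) be W with row i deleted (rows reindexed via Fin.succAbove i). Then tper M = ⊔_{i : Fin (k+1)} (f i + tper W_î). -/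
/-!
A permutation `σ` of `Fin (k + 1)` is determined by the row `i` it sends to the last column
together with the permutation of `Fin k` it induces on the remaining rows and columns. Grouping
the terms of `tper M` by `i`, the entry `f i` factors out of each group (addition distributes
over `max`, and `⊥` is absorbing), and what remains is the tropical permanent of `W_î`.
-/

noncomputable section

variable {G : Type*} [AddCommGroup G] [LinearOrder G] [IsOrderedAddMonoid G]

namespace Fin

open Equiv

def permSnoc {k : ℕ} (i : Fin (k + 1)) (τ : Perm (Fin k)) : Perm (Fin (k + 1)) :=
  ((finSuccEquiv' i).trans τ.optionCongr).trans (finSuccEquiv' (last k)).symm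

variable {k : ℕ}

@[simp]
lemma permSnoc_apply_self (i : Fin (k + 1)) (τ : Perm (Fin k)) : permSnoc i τ i = last k := by
  simp [permSnoc]

@[simp]
lemma permSnoc_apply_succAbove (i : Fin (k + 1)) (τ : Perm (Fin k)) (a : Fin k) :
    permSnoc i τ (i.succAbove a) = castSucc (τ a) := by
  simp [permSnoc, succAbove_last]

lemma permSnoc_injective2 : Function.Injective2 (permSnoc (k := k)) := by
  intro i j τ ρ h
  have hij : i = j := (permSnoc i τ).injective <| by
    rw [permSnoc_apply_self, h, permSnoc_apply_self]
  subst hij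
  refine ⟨rfl, Equiv.ext fun a => castSucc_injective k ?_⟩
  rw [← permSnoc_apply_succAbove, ← permSnoc_apply_succAbove, h]

lemma bijective_uncurry_permSnoc : Function.Bijective (Function.uncurry (permSnoc (k := k))) := by
  rw [Fintype.bijective_iff_injective_and_card]
  refine ⟨permSnoc_injective2.uncurry, ?_⟩
  simp [Fintype.card_perm, Nat.factorial_succ]

lemma sup_univ_perm_eq_sup_permSnoc {α : Type*} [SemilatticeSup α] [OrderBot α]
    (g : Perm (Fin (k + 1)) → α) :
    Finset.univ.sup g = Finset.univ.sup fun i => Finset.univ.sup fun τ => g (permSnoc i τ) := by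
  rw [← Finset.image_univ_of_surjective bijective_uncurry_permSnoc.surjective, Finset.sup_image,
    ← Finset.univ_product_univ, Finset.sup_product_left]
  rfl

lemma sum_permSnoc {R : Type*} [AddCommMonoid R] (M : Matrix (Fin (k + 1)) (Fin (k + 1)) R)
    (i : Fin (k + 1)) (τ : Perm (Fin k)) :
    ∑ j, M j (permSnoc i τ j) = M i (last k) + ∑ a, M (i.succAbove a) (castSucc (τ a)) := by
  simp [sum_univ_succAbove _ i]

end Fin

lemma WithBot.add_finset_sup {α ι : Type*} [Add α] [LinearOrder α] [AddLeftMono α]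
    (c : WithBot α) (s : Finset ι) (g : ι → WithBot α) :
    c + s.sup g = s.sup fun x => c + g x :=
  Finset.apply_sup_eq_sup_comp_of_linearOrder (c + ·) add_right_mono (WithBot.add_bot c)

/-- For the `(k+1) × (k+1)` matrix `M` whose first `k` columns are those
of `W` and whose last column is `f`, the tropical permanent expands along the last column:
`tper M = ⊔_i (f i + tper W_î)`, where `W_î` is `W` with row `i` deleted. -/
theorem tper_expansion_last_column (k : ℕ)
    (W : Matrix (Fin (k + 1)) (Fin k) (WithBot G)) (f : Fin (k + 1) → WithBot G) :
    tper (Matrix.of fun i => Fin.snoc (W i) (f i)) =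
      Finset.univ.sup
        (fun i : Fin (k + 1) =>
          f i + tper (Matrix.of fun a b => W (i.succAbove a) b)) := by
  rw [tper, Fin.sup_univ_perm_eq_sup_permSnoc]
  refine Finset.sup_congr rfl fun i _ => ?_
  rw [tper, WithBot.add_finset_sup]
  refine Finset.sup_congr rfl fun τ _ => ?_
  rw [Fin.sum_permSnoc]
  simp

end
end

section
/- (i) There exists x that is LP̃-feasible if and only if there exists x such that (x, 0) is Phase-I-feasible. (ii) Every Phase-I-feasible (x, t) satisfies t ≤ 0. (iii) If (x, 0) is Phase-I-feasible and exactly n + 1 of the Phase I constraints hold with equality at (x, 0), then x is LP̃-feasible and exactly n of the LP̃ constraints hold with equality at x. -/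
/-!
At `t = 0` the first `m + n + 1` Phase I constraints are exactly those of `LP̃`, and the
remaining two read `0 ≥ 0`, which always holds with equality, and `0 ≥ l'`, which holds strictly
because `l' < 0`. So `(x, 0)` is Phase-I-feasible iff `x` is `LP̃`-feasible, and then it has
exactly one more tight constraint. The constraint `0 ≥ t` gives `t ≤ 0`.
-/

noncomputable section
open scoped Classical
open Finset

variable {G' : Type*} [AddCommGroup G'] [LinearOrder G'] [IsOrderedAddMonoid G']

/-- The two sides `(larger side, smaller side)` of each of the `m + n + 1` constraints of
the program `LP̃`: for each `i`, `(⊔_j (A⁺ i j + x j)) ⊔ b⁺ i ⊔ d i ≥ (⊔_j (A⁻ i j + x j)) ⊔ b⁻ i`;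
`u ≥ ⊔_j x j`; and for each `j`, `x j ≥ l j`. -/
def lpSides {m n : ℕ} (Ap An : Matrix (Fin m) (Fin n) (WithBot G'))
    (bp bn d : Fin m → WithBot G') (u : WithBot G') (l : Fin n → WithBot G')
    (x : Fin n → WithBot G') :
    Fin m ⊕ (Fin n ⊕ Fin 1) → WithBot G' × WithBot G'
  | Sum.inl i =>
      ((univ.sup fun j => Ap i j + x j) ⊔ bp i ⊔ d i,
       (univ.sup fun j => An i j + x j) ⊔ bn i)
  | Sum.inr (Sum.inl j) => (x j, l j)
  | Sum.inr (Sum.inr _) => (u, univ.sup fun j => x j)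

/-- The two sides `(larger side, smaller side)` of each of the `m + n + 3` constraints of
the Phase I program: for each `i`,
`(⊔_j (A⁺ i j + x j)) ⊔ (b⁺ i + t) ⊔ d i ≥ (⊔_j (A⁻ i j + x j)) ⊔ (b⁻ i + t)`;
`u + t ≥ ⊔_j x j`; for each `j`, `x j ≥ l j`; `0 ≥ t`; and `t ≥ l'`. -/
def phaseISides {m n : ℕ} (Ap An : Matrix (Fin m) (Fin n) (WithBot G'))
    (bp bn d : Fin m → WithBot G') (u : WithBot G') (l : Fin n → WithBot G')
    (l' : WithBot G') (x : Fin n → WithBot G') (t : WithBot G') :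
    Fin m ⊕ (Fin n ⊕ Fin 3) → WithBot G' × WithBot G'
  | Sum.inl i =>
      ((univ.sup fun j => Ap i j + x j) ⊔ (bp i + t) ⊔ d i,
       (univ.sup fun j => An i j + x j) ⊔ (bn i + t))
  | Sum.inr (Sum.inl j) => (x j, l j)
  | Sum.inr (Sum.inr ⟨0, _⟩) => (u + t, univ.sup fun j => x j)
  | Sum.inr (Sum.inr ⟨1, _⟩) => (0, t)
  | Sum.inr (Sum.inr ⟨2, _⟩) => (t, l')

/-- A point is feasible for a family of two-sided constraints when at each index the smaller
side is below the larger side. -/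
def Feasible {ι : Type*} (sides : ι → WithBot G' × WithBot G') : Prop :=
  ∀ idx, (sides idx).2 ≤ (sides idx).1

/-- The number of constraints holding with equality. -/
def eqCount {ι : Type*} [Fintype ι] (sides : ι → WithBot G' × WithBot G') : ℕ :=
  (univ.filter (fun idx => (sides idx).1 = (sides idx).2)).card

lemma eqCount_eq_sum {ι : Type*} [Fintype ι] (sides : ι → WithBot G' × WithBot G') :
    eqCount sides = ∑ idx, if (sides idx).1 = (sides idx).2 then 1 else 0 :=
  card_filter _ _

lemma feasible_sum_iff {α β : Type*} (sides : α ⊕ β → WithBot G' × WithBot G') :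
    Feasible sides ↔ Feasible (fun a => sides (.inl a)) ∧ Feasible (fun b => sides (.inr b)) :=
  Sum.forall

lemma eqCount_sum {α β : Type*} [Fintype α] [Fintype β] (sides : α ⊕ β → WithBot G' × WithBot G') :
    eqCount sides = eqCount (fun a => sides (.inl a)) + eqCount (fun b => sides (.inr b)) := by
  simp only [eqCount_eq_sum, Fintype.sum_sum_type]

section PhaseIAtZero

variable {m n : ℕ} {Ap An : Matrix (Fin m) (Fin n) (WithBot G')} {bp bn d : Fin m → WithBot G'}
  {u : WithBot G'} {l : Fin n → WithBot G'} {l' : WithBot G'} {x : Fin n → WithBot G'}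

lemma phaseISides_zero_inl (i : Fin m) :
    phaseISides Ap An bp bn d u l l' x 0 (.inl i) = lpSides Ap An bp bn d u l x (.inl i) := by
  simp only [phaseISides, lpSides, add_zero]

lemma phaseISides_zero_inr_inl (j : Fin n) :
    phaseISides Ap An bp bn d u l l' x 0 (.inr (.inl j)) =
      lpSides Ap An bp bn d u l x (.inr (.inl j)) :=
  rfl

lemma feasible_phaseISides_zero_inr_inr_iff (hl' : l' ≤ 0) :
    Feasible (fun k : Fin 3 => phaseISides Ap An bp bn d u l l' x 0 (.inr (.inr k))) ↔
      Feasible (fun k : Fin 1 => lpSides Ap An bp bn d u l x (.inr (.inr k))) := by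
  simp [Feasible, Fin.forall_fin_succ, phaseISides, lpSides, hl']

lemma eqCount_phaseISides_zero_inr_inr (hl' : l' ≠ 0) :
    eqCount (fun k : Fin 3 => phaseISides Ap An bp bn d u l l' x 0 (.inr (.inr k))) =
      eqCount (fun k : Fin 1 => lpSides Ap An bp bn d u l x (.inr (.inr k))) + 1 := by
  simp only [eqCount_eq_sum, Fin.sum_univ_three, Fin.sum_univ_one]
  simp only [phaseISides, lpSides, add_zero, hl'.symm, ↓reduceIte, Nat.add_right_cancel_iff]
  -- the two `if`s differ only in their `Decidable` instances
  congr

lemma feasible_phaseISides_zero_iff (hl' : l' ≤ 0) :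
    Feasible (phaseISides Ap An bp bn d u l l' x 0) ↔ Feasible (lpSides Ap An bp bn d u l x) := by
  simp only [feasible_sum_iff, phaseISides_zero_inl, phaseISides_zero_inr_inl,
    feasible_phaseISides_zero_inr_inr_iff hl']

lemma eqCount_phaseISides_zero (hl' : l' ≠ 0) :
    eqCount (phaseISides Ap An bp bn d u l l' x 0) = eqCount (lpSides Ap An bp bn d u l x) + 1 := by
  simp only [eqCount_sum, phaseISides_zero_inl,
    phaseISides_zero_inr_inl, eqCount_phaseISides_zero_inr_inr hl']
  ring

end PhaseIAtZero

/-- (i) `LP̃` is feasible iff some `(x, 0)` is Phase-I-feasible;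
(ii) every Phase-I-feasible `(x, t)` has `t ≤ 0`; (iii) if `(x, 0)` is Phase-I-feasible and
exactly `n + 1` Phase I constraints are active there, then `x` is `LP̃`-feasible with exactly
`n` active constraints. -/
theorem phaseI_correctness (m n : ℕ)
    (Ap An : Matrix (Fin m) (Fin n) (WithBot G'))
    (bp bn d : Fin m → WithBot G') (u : WithBot G') (l : Fin n → WithBot G')
    (l' : WithBot G') (hl' : l' < 0) :
    ((∃ x, Feasible (lpSides Ap An bp bn d u l x)) ↔
      (∃ x, Feasible (phaseISides Ap An bp bn d u l l' x 0))) ∧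
    (∀ x t, Feasible (phaseISides Ap An bp bn d u l l' x t) → t ≤ 0) ∧
    (∀ x, Feasible (phaseISides Ap An bp bn d u l l' x 0) →
      eqCount (phaseISides Ap An bp bn d u l l' x 0) = n + 1 →
      Feasible (lpSides Ap An bp bn d u l x) ∧
        eqCount (lpSides Ap An bp bn d u l x) = n) := by
  have feasible_iff : ∀ x, Feasible (phaseISides Ap An bp bn d u l l' x 0) ↔
      Feasible (lpSides Ap An bp bn d u l x) := fun _ => feasible_phaseISides_zero_iff hl'.le
  refine ⟨exists_congr fun x => (feasible_iff x).symm, fun x t h => h (.inr (.inr 1)),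
    fun x h hcount => ⟨(feasible_iff x).1 h, ?_⟩⟩
  rw [eqCount_phaseISides_zero hl'.ne] at hcount
  omega

end
end
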